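/- arXiv:1208.2832 — 8 statements merged into one kernel-verified Lean document; each statement's English description precedes it below -/
import Mathlib

section
/- Let ν ≥ 1 and r ≥ 1 be natural numbers, let m = r·2^{ν−1}, and let z be a complex number with |z| ≤ 2^{-2^{ν−1}}. Then |exp(z) − Σ_{i=0}^{r} z^i / i!| < 2^{-m}. -/
open Finset
open scoped Nat

/-! For `‖z‖ ≤ 1`, the estimate `Complex.exp_bound` bounds the Taylor residual after `r + 1` terms
by `‖z‖ ^ (r + 1)` once `r ≥ 1`. With `‖z‖ ≤ a := 2 ^ (-2 ^ (ν - 1)) < 1` this is strictly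
below `a ^ r = 2 ^ (-m)`. -/

lemma Nat.succ_le_factorial_mul_self {n : ℕ} (hn : 2 ≤ n) : n + 1 ≤ n ! * n :=
  calc n + 1 ≤ n * n := by nlinarith
    _ ≤ n ! * n := Nat.mul_le_mul_right n n.self_le_factorial

lemma Complex.norm_exp_sub_sum_range_le_pow {z : ℂ} (hz : ‖z‖ ≤ 1) {n : ℕ} (hn : 2 ≤ n) :
    ‖exp z - ∑ i ∈ range n, z ^ i / (i ! : ℂ)‖ ≤ ‖z‖ ^ n := by
  have hcoeff : (n.succ : ℝ) * (n ! * n : ℝ)⁻¹ ≤ 1 := by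
    rw [mul_inv_le_iff₀ (by positivity), one_mul]
    exact_mod_cast Nat.succ_le_factorial_mul_self hn
  calc ‖exp z - ∑ i ∈ range n, z ^ i / (i ! : ℂ)‖
      ≤ ‖z‖ ^ n * ((n.succ : ℝ) * (n ! * n : ℝ)⁻¹) := exp_bound hz (by omega)
    _ ≤ ‖z‖ ^ n := mul_le_of_le_one_right (by positivity) hcoeff

lemma pow_succ_lt_pow_of_le_of_lt_one {t a : ℝ} (ht : 0 ≤ t) (hta : t ≤ a) (ha₀ : 0 < a)
    (ha₁ : a < 1) (r : ℕ) : t ^ (r + 1) < a ^ r :=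
  calc t ^ (r + 1) ≤ a ^ (r + 1) := pow_le_pow_left₀ ht hta _
    _ < a ^ r := pow_lt_pow_right_of_lt_one₀ ha₀ ha₁ r.lt_succ_self

theorem exp_taylor_residual_lt_FEE_general (ν r : ℕ) (hr : 1 ≤ r)
    (m : ℕ) (hm : m = r * 2 ^ (ν - 1))
    (z : ℂ) (hz : ‖z‖ ≤ 2 ^ (-(2 ^ (ν - 1) : ℤ))) :
    ‖Complex.exp z - ∑ i ∈ Finset.range (r + 1), z ^ i / (Nat.factorial i : ℂ)‖ <
      2 ^ (-(m : ℤ)) := by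
  set a : ℝ := 2 ^ (-(2 ^ (ν - 1) : ℤ)) with ha
  have ha₀ : 0 < a := by positivity
  have ha₁ : a < 1 := zpow_lt_one_of_neg₀ one_lt_two (by simp)
  calc ‖Complex.exp z - ∑ i ∈ range (r + 1), z ^ i / (i ! : ℂ)‖
      ≤ ‖z‖ ^ (r + 1) := Complex.norm_exp_sub_sum_range_le_pow (hz.trans ha₁.le) (by omega)
    _ < a ^ r := pow_succ_lt_pow_of_le_of_lt_one (norm_nonneg z) hz ha₀ ha₁ r
    _ = 2 ^ (-(m : ℤ)) := by
      rw [ha, ← zpow_natCast, ← zpow_mul, hm]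
      push_cast
      ring_nf

/-- In the FEE method: if `m = r·2^{ν-1}` and `|z| ≤ 2^{-2^{ν-1}}`, then the
residual of the Taylor series of `exp` truncated after `r` terms is smaller
than `2^{-m}`. -/
theorem exp_taylor_residual_lt_FEE (ν r : ℕ) (hν : 1 ≤ ν) (hr : 1 ≤ r)
    (m : ℕ) (hm : m = r * 2 ^ (ν - 1))
    (z : ℂ) (hz : ‖z‖ ≤ 2 ^ (-(2 ^ (ν - 1) : ℤ))) :
    ‖Complex.exp z - ∑ i ∈ Finset.range (r + 1), z ^ i / (Nat.factorial i : ℂ)‖ <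
      2 ^ (-(m : ℤ)) :=
  exp_taylor_residual_lt_FEE_general ν r hr m hm z hz
end

section
/- Let z be a complex number and let k1 ≥ 1 and r1 ≥ 1 be natural numbers. For 1 ≤ t ≤ k1 define σ_t = Σ_{j=0}^{r1−1} z^j · ((t−1)·r1)! / ((t−1)·r1 + j)!, and for 2 ≤ t ≤ k1 define τ_t = z^{r1} · ((t−2)·r1)! / ((t−1)·r1)!. Define G_{k1} = σ_{k1} and, for t = k1−1 down to 1, G_t = σ_t + τ_{t+1}·G_{t+1}. Then G_1 = Σ_{i=0}^{k1·r1 − 1} z^i / i!, i.e., the partial sum of the exponential series of length k1·r1 equals the nested (Horner-type) expression σ_1 + τ_2[σ_2 + τ_3[σ_3 + … + τ_{k1−1}[σ_{k1−1} + τ_{k1}·σ_{k1}]]]. -/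
/-!
With `S(n, N) = ∑_{j<N} z^j n!/(n+j)!` (`expSegment z n N`), the exponential partial sum is `S(0, k₁r₁)`.
Splitting the range gives `S(n, a + b) = S(n, a) + z^a n!/(n+a)! · S(n + a, b)`; for
`n = (t-1)r₁` and `a = r₁` this is the recursion `G_t = σ_t + τ_{t+1} G_{t+1}`, so by downward
induction `G_t = S((t-1)r₁, (k₁-t+1)r₁)`.
-/

open Finset Nat

section ExpSegment

variable {K : Type*} [Field K]

/-- The paper's `σ_t` is `expSegment z ((t-1) r₁) r₁`. -/
def expSegment (z : K) (n N : ℕ) : K :=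
  ∑ j ∈ range N, z ^ j * (n ! : K) / ((n + j) ! : K)

theorem expSegment_zero_left (z : K) (N : ℕ) :
    expSegment z 0 N = ∑ i ∈ range N, z ^ i / (i ! : K) := by
  simp [expSegment]

theorem expSegment_add [CharZero K] (z : K) (n a b : ℕ) :
    expSegment z n (a + b) =
      expSegment z n a + z ^ a * (n ! : K) / ((n + a) ! : K) * expSegment z (n + a) b := by
  rw [expSegment, sum_range_add, expSegment, expSegment, mul_sum]
  congr 1
  refine sum_congr rfl fun j _ => ?_
  have hna : ((n + a) ! : K) ≠ 0 := Nat.cast_ne_zero.2 (factorial_ne_zero _)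
  have hnaj : ((n + a + j) ! : K) ≠ 0 := Nat.cast_ne_zero.2 (factorial_ne_zero _)
  rw [← add_assoc]
  field_simp
  ring

theorem expSegment_succ_mul [CharZero K] (z : K) (s r m : ℕ) :
    expSegment z (s * r) ((m + 1) * r) =
      expSegment z (s * r) r +
        z ^ r * ((s * r) ! : K) / (((s + 1) * r) ! : K) * expSegment z ((s + 1) * r) (m * r) := by
  rw [add_mul, one_mul, add_comm (m * r), expSegment_add, ← succ_mul]

end ExpSegment

theorem exp_partial_sum_nested_general (z : ℂ) (k1 r1 : ℕ) (hk1 : 1 ≤ k1)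
    (σ τ : ℕ → ℂ)
    (hσ : ∀ t, 1 ≤ t → t ≤ k1 →
      σ t = ∑ j ∈ Finset.range r1,
        z ^ j * (Nat.factorial ((t - 1) * r1) : ℂ) / (Nat.factorial ((t - 1) * r1 + j) : ℂ))
    (hτ : ∀ t, 2 ≤ t → t ≤ k1 →
      τ t = z ^ r1 * (Nat.factorial ((t - 2) * r1) : ℂ) / (Nat.factorial ((t - 1) * r1) : ℂ))
    (G : ℕ → ℂ)
    (hGtop : G k1 = σ k1)
    (hGstep : ∀ t, 1 ≤ t → t < k1 → G t = σ t + τ (t + 1) * G (t + 1)) :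
    G 1 = ∑ i ∈ Finset.range (k1 * r1), z ^ i / (Nat.factorial i : ℂ) := by
  have hσ' : ∀ s, s < k1 → σ (s + 1) = expSegment z (s * r1) r1 := fun s hs => by
    simpa [expSegment] using hσ (s + 1) (by omega) hs
  have hτ' : ∀ s, s + 1 < k1 →
      τ (s + 2) = z ^ r1 * ((s * r1) ! : ℂ) / (((s + 1) * r1) ! : ℂ) := fun s hs => by
    simpa using hτ (s + 2) (by omega) hs
  have hG : ∀ s ≤ k1 - 1, G (s + 1) = expSegment z (s * r1) ((k1 - s) * r1) := by
    intro s hs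
    induction hs using Nat.decreasingInduction with
    | self =>
      obtain ⟨k, rfl⟩ : ∃ k, k1 = k + 1 := ⟨k1 - 1, by omega⟩
      simpa [hGtop] using hσ' k (by omega)
    | of_succ s hs ih =>
      rw [hGstep (s + 1) (by omega) (by omega), hσ' s (by omega), hτ' s (by omega), ih,
        show k1 - s = k1 - (s + 1) + 1 by omega, expSegment_succ_mul z s r1 (k1 - (s + 1))]
  simpa [expSegment_zero_left, show k1 - 1 + 1 = k1 by omega] using hG 0 (zero_le _)

/-- The partial sum of the exponential series of length `k1·r1` equals the
nested (Horner-type) expression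
`σ_1 + τ_2[σ_2 + τ_3[σ_3 + … + τ_{k1-1}[σ_{k1-1} + τ_{k1}·σ_{k1}]]]`,
where `σ_t = Σ_{j=0}^{r1-1} z^j·((t-1)r1)!/((t-1)r1+j)!` and
`τ_t = z^{r1}·((t-2)r1)!/((t-1)r1)!`. -/
theorem exp_partial_sum_nested (z : ℂ) (k1 r1 : ℕ) (hk1 : 1 ≤ k1) (hr1 : 1 ≤ r1)
    (σ τ : ℕ → ℂ)
    (hσ : ∀ t, 1 ≤ t → t ≤ k1 →
      σ t = ∑ j ∈ Finset.range r1,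
        z ^ j * (Nat.factorial ((t - 1) * r1) : ℂ) / (Nat.factorial ((t - 1) * r1 + j) : ℂ))
    (hτ : ∀ t, 2 ≤ t → t ≤ k1 →
      τ t = z ^ r1 * (Nat.factorial ((t - 2) * r1) : ℂ) / (Nat.factorial ((t - 1) * r1) : ℂ))
    (G : ℕ → ℂ)
    (hGtop : G k1 = σ k1)
    (hGstep : ∀ t, 1 ≤ t → t < k1 → G t = σ t + τ (t + 1) * G (t + 1)) :
    G 1 = ∑ i ∈ Finset.range (k1 * r1), z ^ i / (Nat.factorial i : ℂ) :=
  exp_partial_sum_nested_general z k1 r1 hk1 σ τ hσ hτ G hGtop hGstep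
end

section
/- (Lemma 3) Let k1 ≥ 1 and m1 ≥ 5 be natural numbers. Let σ_1, …, σ_{k1} and σ*_1, …, σ*_{k1} be real numbers with |σ_t| < 4/3 and |σ*_t − σ_t| ≤ 2^{-m1} for all t; let τ_2, …, τ_{k1} and τ*_2, …, τ*_{k1} be real numbers with |τ_t| ≤ 1/4 and |τ*_t − τ_t| ≤ 2^{-m1} for all t; let ε_2, …, ε_{k1} be real numbers with |ε_i| < 2^{-m1}. Define h_1 = σ*_{k1} and h_i = σ*_{k1−i+1} + τ*_{k1−i+2}·h_{i−1} + ε_i for 2 ≤ i ≤ k1. Then |h_i| < 2 for every i with 1 ≤ i ≤ k1. -/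
/-! Perturbing the data by at most `2^{-m1} ≤ 1/32` gives `|σ*_t| < 4/3 + 1/32` and
`|τ*_t| ≤ 1/4 + 1/32`. If `|h_{i-1}| < 2`, then
`|h_i| < (4/3 + 1/32) + 2 (1/4 + 1/32) + 1/32 = 47/24 < 2`, so the bound propagates by induction. -/

lemma two_zpow_neg_le_one_div_32 {m : ℕ} (hm : 5 ≤ m) : (2 : ℝ) ^ (-(m : ℤ)) ≤ 1 / 32 := by
  rw [show (1 : ℝ) / 32 = 2 ^ (-(5 : ℤ)) by norm_num]
  exact zpow_le_zpow_right₀ (by norm_num) (by omega)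

lemma abs_le_add_of_abs_sub_le {x y c r : ℝ} (hy : |y| ≤ c) (hxy : |x - y| ≤ r) :
    |x| ≤ c + r := by
  linarith [abs_sub_abs_le_abs_sub x y]

lemma abs_lt_add_of_abs_sub_le {x y c r : ℝ} (hy : |y| < c) (hxy : |x - y| ≤ r) :
    |x| < c + r := by
  linarith [abs_sub_abs_le_abs_sub x y]

lemma abs_add_mul_add_lt {a b x e A B M E : ℝ} (ha : |a| < A) (hb : |b| ≤ B) (hx : |x| < M)
    (he : |e| < E) : |a + b * x + e| < A + B * M + E := by
  have hbx : |b * x| ≤ B * M := by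
    rw [abs_mul]
    exact mul_le_mul hb hx.le (abs_nonneg x) ((abs_nonneg b).trans hb)
  calc |a + b * x + e| ≤ |a| + |b * x| + |e| := abs_add_three a (b * x) e
    _ < A + B * M + E := by linarith

theorem lemma3_h_bound_general (k1 m1 : ℕ) (hm1 : 5 ≤ m1)
    (σ σs τ τs ε h : ℕ → ℝ)
    (hσ : ∀ t, 1 ≤ t → t ≤ k1 → |σ t| < 4 / 3)
    (hσs : ∀ t, 1 ≤ t → t ≤ k1 → |σs t - σ t| ≤ 2 ^ (-(m1 : ℤ)))
    (hτ : ∀ t, 2 ≤ t → t ≤ k1 → |τ t| ≤ 1 / 4)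
    (hτs : ∀ t, 2 ≤ t → t ≤ k1 → |τs t - τ t| ≤ 2 ^ (-(m1 : ℤ)))
    (hε : ∀ i, 2 ≤ i → i ≤ k1 → |ε i| < 2 ^ (-(m1 : ℤ)))
    (h1 : h 1 = σs k1)
    (hstep : ∀ i, 2 ≤ i → i ≤ k1 →
      h i = σs (k1 - i + 1) + τs (k1 - i + 2) * h (i - 1) + ε i) :
    ∀ i, 1 ≤ i → i ≤ k1 → |h i| < 2 := by
  have hδ := two_zpow_neg_le_one_div_32 hm1
  have hσs_lt : ∀ t, 1 ≤ t → t ≤ k1 → |σs t| < 4 / 3 + 1 / 32 := fun t h1t htk =>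
    abs_lt_add_of_abs_sub_le (hσ t h1t htk) ((hσs t h1t htk).trans hδ)
  have hτs_le : ∀ t, 2 ≤ t → t ≤ k1 → |τs t| ≤ 1 / 4 + 1 / 32 := fun t h2t htk =>
    abs_le_add_of_abs_sub_le (hτ t h2t htk) ((hτs t h2t htk).trans hδ)
  intro i hi hik
  induction i, hi using Nat.le_induction with
  | base => linarith [h1 ▸ hσs_lt k1 (by omega) le_rfl]
  | succ n hn ih =>
    rw [hstep (n + 1) (by omega) hik, Nat.add_sub_cancel]
    calc _ < (4 / 3 + 1 / 32) + (1 / 4 + 1 / 32) * 2 + 1 / 32 :=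
          abs_add_mul_add_lt (hσs_lt _ (by omega) (by omega)) (hτs_le _ (by omega) (by omega))
            (ih (by omega)) ((hε _ (by omega) hik).trans_le hδ)
      _ < 2 := by norm_num

/-- (Lemma 3) The computed values `h_i` of the iterative evaluation of the
nested expression `σ_1 + τ_2[σ_2 + … + τ_{k1}σ_{k1}]` are bounded by `2`. -/
theorem lemma3_h_bound (k1 m1 : ℕ) (hk1 : 1 ≤ k1) (hm1 : 5 ≤ m1)
    (σ σs τ τs ε h : ℕ → ℝ)
    (hσ : ∀ t, 1 ≤ t → t ≤ k1 → |σ t| < 4 / 3)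
    (hσs : ∀ t, 1 ≤ t → t ≤ k1 → |σs t - σ t| ≤ 2 ^ (-(m1 : ℤ)))
    (hτ : ∀ t, 2 ≤ t → t ≤ k1 → |τ t| ≤ 1 / 4)
    (hτs : ∀ t, 2 ≤ t → t ≤ k1 → |τs t - τ t| ≤ 2 ^ (-(m1 : ℤ)))
    (hε : ∀ i, 2 ≤ i → i ≤ k1 → |ε i| < 2 ^ (-(m1 : ℤ)))
    (h1 : h 1 = σs k1)
    (hstep : ∀ i, 2 ≤ i → i ≤ k1 →
      h i = σs (k1 - i + 1) + τs (k1 - i + 2) * h (i - 1) + ε i) :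
    ∀ i, 1 ≤ i → i ≤ k1 → |h i| < 2 :=
  lemma3_h_bound_general k1 m1 hm1 σ σs τ τs ε h hσ hσs hτ hτs hε h1 hstep
end

section
/- (Lemma 4) Let k1 ≥ 3 and m1 ≥ 5 be natural numbers. Let σ_1, …, σ_{k1} and σ*_1, …, σ*_{k1} be real numbers with |σ_t| < 4/3 and |σ*_t − σ_t| ≤ 2^{-m1} for all t; let τ_2, …, τ_{k1} and τ*_2, …, τ*_{k1} be real numbers with |τ_t| ≤ 1/4 and |τ*_t − τ_t| ≤ 2^{-m1} for all t; let ε_2, …, ε_{k1} be real numbers with |ε_i| < 2^{-m1}. Define h_1 = σ*_{k1} and h_i = σ*_{k1−i+1} + τ*_{k1−i+2}·h_{i−1} + ε_i for 2 ≤ i ≤ k1, and define H_1 = σ_{k1} and H_i = σ_{k1−i+1} + τ_{k1−i+2}·H_{i−1} for 2 ≤ i ≤ k1. Then the total error satisfies |h_{k1} − H_{k1}| < 2^{-m1+k1}. -/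
/-!
Write `δ = 2^{-m1}`. The exact values stay bounded, `|H_i| ≤ 16/9`, because
`4/3 + (1/4)(16/9) = 16/9`. Expanding `h_i - H_i` gives
`|h_i - H_i| ≤ 2δ + |τ*| |h_{i-1} - H_{i-1}| + δ |H_{i-1}|` with `|τ*| ≤ 1/4 + δ ≤ 9/32` (as `m1 ≥ 5`),
so the error never exceeds `6δ`: `(2 + 16/9) δ + (9/32)(6δ) ≤ 6δ`. Finally `6δ < 2^{k1} δ`
as soon as `k1 ≥ 3`.
-/

section OrderedRing

variable {α : Type*} [Ring α] [LinearOrder α] [IsOrderedRing α]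

theorem le_of_le_add_mul_pred {u : ℕ → α} {n : ℕ} {A B M : α} (hB : 0 ≤ B)
    (hM : A + B * M ≤ M) (h1 : u 1 ≤ M)
    (hstep : ∀ i, 2 ≤ i → i ≤ n → u i ≤ A + B * u (i - 1)) :
    ∀ i, 1 ≤ i → i ≤ n → u i ≤ M := by
  intro i hi
  induction i, hi using Nat.le_induction with
  | base => exact fun _ ↦ h1
  | succ i hi ih =>
    intro hin
    calc u (i + 1) ≤ A + B * u i := hstep (i + 1) (by omega) hin
      _ ≤ A + B * M := by gcongr; exact ih (by omega)
      _ ≤ M := hM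

theorem abs_add_mul_le (s t x : α) : |s + t * x| ≤ |s| + |t| * |x| :=
  (abs_add_le _ _).trans_eq (congrArg _ (abs_mul t x))

theorem abs_add_mul_add_sub_add_mul_le (s s' t t' x x' e : α) :
    |s' + t' * x' + e - (s + t * x)| ≤
      |s' - s| + |t'| * |x' - x| + |t' - t| * |x| + |e| := by
  have hsplit : s' + t' * x' + e - (s + t * x) =
      (s' - s) + (t' * (x' - x) + (t' - t) * x) + e := by noncomm_ring
  rw [hsplit]
  calc _ ≤ |s' - s| + |t' * (x' - x) + (t' - t) * x| + |e| := abs_add_three _ _ _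
    _ ≤ |s' - s| + (|t' * (x' - x)| + |(t' - t) * x|) + |e| := by gcongr; exact abs_add_le _ _
    _ = _ := by rw [abs_mul, abs_mul]; abel

end OrderedRing

/-- (Lemma 4) The total error of the iterative evaluation of the nested
expression `σ_1 + τ_2[σ_2 + … + τ_{k1}σ_{k1}]` with working accuracy
`2^{-m1}` is smaller than `2^{-m1+k1}`. -/
theorem lemma4_error_bound (k1 m1 : ℕ) (hk1 : 3 ≤ k1) (hm1 : 5 ≤ m1)
    (σ σs τ τs ε h H : ℕ → ℝ)
    (hσ : ∀ t, 1 ≤ t → t ≤ k1 → |σ t| < 4 / 3)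
    (hσs : ∀ t, 1 ≤ t → t ≤ k1 → |σs t - σ t| ≤ 2 ^ (-(m1 : ℤ)))
    (hτ : ∀ t, 2 ≤ t → t ≤ k1 → |τ t| ≤ 1 / 4)
    (hτs : ∀ t, 2 ≤ t → t ≤ k1 → |τs t - τ t| ≤ 2 ^ (-(m1 : ℤ)))
    (hε : ∀ i, 2 ≤ i → i ≤ k1 → |ε i| < 2 ^ (-(m1 : ℤ)))
    (h1 : h 1 = σs k1)
    (hstep : ∀ i, 2 ≤ i → i ≤ k1 →
      h i = σs (k1 - i + 1) + τs (k1 - i + 2) * h (i - 1) + ε i)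
    (H1 : H 1 = σ k1)
    (Hstep : ∀ i, 2 ≤ i → i ≤ k1 →
      H i = σ (k1 - i + 1) + τ (k1 - i + 2) * H (i - 1)) :
    |h k1 - H k1| < 2 ^ (-(m1 : ℤ) + k1) := by
  set δ : ℝ := 2 ^ (-(m1 : ℤ)) with hδ
  have hδ_pos : 0 < δ := by positivity
  have hδ_le : δ ≤ 1 / 32 := by
    calc δ ≤ 2 ^ (-5 : ℤ) := zpow_le_zpow_right₀ (by norm_num) (by omega)
      _ = 1 / 32 := by norm_num
  have hH : ∀ i, 1 ≤ i → i ≤ k1 → |H i| ≤ 16 / 9 := by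
    refine le_of_le_add_mul_pred (A := 4 / 3) (B := 1 / 4) (by norm_num) (by norm_num)
      (by rw [H1]; linarith [hσ k1 (by omega) le_rfl]) fun i hi hik ↦ ?_
    rw [Hstep i hi hik]
    calc _ ≤ |σ (k1 - i + 1)| + |τ (k1 - i + 2)| * |H (i - 1)| := abs_add_mul_le _ _ _
      _ ≤ 4 / 3 + 1 / 4 * |H (i - 1)| := by
        gcongr
        exacts [(hσ _ (by omega) (by omega)).le, hτ _ (by omega) (by omega)]
  have herr : ∀ i, 1 ≤ i → i ≤ k1 → |h i - H i| ≤ 6 * δ := by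
    refine le_of_le_add_mul_pred (A := (2 + 16 / 9) * δ) (B := 9 / 32) (by norm_num)
      (by linarith) (by rw [h1, H1]; linarith [hσs k1 (by omega) le_rfl]) fun i hi hik ↦ ?_
    have hτs_le : |τs (k1 - i + 2)| ≤ 9 / 32 := by
      linarith [abs_sub_abs_le_abs_sub (τs (k1 - i + 2)) (τ (k1 - i + 2)),
        hτs (k1 - i + 2) (by omega) (by omega), hτ (k1 - i + 2) (by omega) (by omega)]
    rw [hstep i hi hik, Hstep i hi hik]
    calc _ ≤ |σs (k1 - i + 1) - σ (k1 - i + 1)|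
          + |τs (k1 - i + 2)| * |h (i - 1) - H (i - 1)|
          + |τs (k1 - i + 2) - τ (k1 - i + 2)| * |H (i - 1)| + |ε i| :=
        abs_add_mul_add_sub_add_mul_le _ _ _ _ _ _ _
      _ ≤ δ + 9 / 32 * |h (i - 1) - H (i - 1)| + δ * (16 / 9) + δ := by
        gcongr
        exacts [hσs _ (by omega) (by omega), hτs _ (by omega) (by omega),
          hH _ (by omega) (by omega), (hε i hi hik).le]
      _ = _ := by ring
  calc |h k1 - H k1| ≤ 6 * δ := herr k1 (by omega) le_rfl
    _ < 2 ^ (3 : ℤ) * δ := by linarith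
    _ ≤ 2 ^ (k1 : ℤ) * δ := by gcongr <;> norm_num; omega
    _ = _ := by rw [hδ, ← zpow_add₀ two_ne_zero, add_comm]
end

section
/- Let m ≥ 4 and k1 be natural numbers with 3 ≤ k1 ≤ m, and set m1 = 2m + 1. Let σ_1, …, σ_{k1}, σ*_1, …, σ*_{k1}, τ_2, …, τ_{k1}, τ*_2, …, τ*_{k1}, ε_2, …, ε_{k1} be real numbers with |σ_t| < 4/3, |σ*_t − σ_t| ≤ 2^{-m1}, |τ_t| ≤ 1/4, |τ*_t − τ_t| ≤ 2^{-m1}, and |ε_i| < 2^{-m1}. Define h_1 = σ*_{k1}, h_i = σ*_{k1−i+1} + τ*_{k1−i+2}·h_{i−1} + ε_i for 2 ≤ i ≤ k1, and H_1 = σ_{k1}, H_i = σ_{k1−i+1} + τ_{k1−i+2}·H_{i−1} for 2 ≤ i ≤ k1. Then |h_{k1} − H_{k1}| ≤ 2^{-(m+1)}. -/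
/-!
Write `c = 2^{-m1}`. By induction along the recurrence, `|H_i| ≤ 16/9` (the fixed point of
`X ↦ 4/3 + X/4`) and `|h_i - H_i| ≤ 8c`: since `|τ*_t| ≤ 1/2`, one step maps an error `e` to at
most `e/2 + (2 + 16/9) c`, which keeps the bound `8c`. Finally `8c = 2^{2-2m} ≤ 2^{-(m+1)}`.
-/

lemma abs_add_mul_sub_add_mul_le (s s' t t' x x' e : ℝ) :
    |s' + t' * x' + e - (s + t * x)| ≤
      |s' - s| + |t'| * |x' - x| + |t' - t| * |x| + |e| := by
  have hsplit : s' + t' * x' + e - (s + t * x) = (s' - s) + t' * (x' - x) + (t' - t) * x + e := by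
    ring
  rw [hsplit, ← abs_mul, ← abs_mul]
  refine (abs_add_le _ _).trans ?_
  gcongr
  refine (abs_add_le _ _).trans ?_
  gcongr
  exact abs_add_le _ _

lemma horner_step_bounds {s s' t t' x x' e c : ℝ} (hc : c ≤ 1 / 4)
    (hs : |s| < 4 / 3) (hs' : |s' - s| ≤ c) (ht : |t| ≤ 1 / 4) (ht' : |t' - t| ≤ c)
    (he : |e| ≤ c) (hx : |x| ≤ 16 / 9) (hx' : |x' - x| ≤ 8 * c) :
    |s + t * x| ≤ 16 / 9 ∧ |s' + t' * x' + e - (s + t * x)| ≤ 8 * c := by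
  have hc0 : 0 ≤ c := (abs_nonneg e).trans he
  have habs_t' : |t'| ≤ 1 / 2 := by
    have := abs_sub_abs_le_abs_sub t' t
    linarith
  constructor
  · calc |s + t * x| ≤ |s| + |t| * |x| := (abs_add_le _ _).trans_eq (by rw [abs_mul])
      _ ≤ 4 / 3 + 1 / 4 * (16 / 9) := by gcongr
      _ = 16 / 9 := by norm_num
  · calc |s' + t' * x' + e - (s + t * x)|
          ≤ |s' - s| + |t'| * |x' - x| + |t' - t| * |x| + |e| :=
            abs_add_mul_sub_add_mul_le s s' t t' x x' e
      _ ≤ c + 1 / 2 * (8 * c) + c * (16 / 9) + c := by gcongr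
      _ ≤ 8 * c := by linarith

section
variable {k1 : ℕ} {c : ℝ} {σ σs τ τs ε h H : ℕ → ℝ}

lemma horner_bounds (hc : c ≤ 1 / 4)
    (hσ : ∀ t, 1 ≤ t → t ≤ k1 → |σ t| < 4 / 3)
    (hσs : ∀ t, 1 ≤ t → t ≤ k1 → |σs t - σ t| ≤ c)
    (hτ : ∀ t, 2 ≤ t → t ≤ k1 → |τ t| ≤ 1 / 4)
    (hτs : ∀ t, 2 ≤ t → t ≤ k1 → |τs t - τ t| ≤ c)
    (hε : ∀ i, 2 ≤ i → i ≤ k1 → |ε i| ≤ c)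
    (h1 : h 1 = σs k1)
    (hstep : ∀ i, 2 ≤ i → i ≤ k1 →
      h i = σs (k1 - i + 1) + τs (k1 - i + 2) * h (i - 1) + ε i)
    (H1 : H 1 = σ k1)
    (Hstep : ∀ i, 2 ≤ i → i ≤ k1 →
      H i = σ (k1 - i + 1) + τ (k1 - i + 2) * H (i - 1)) :
    ∀ i, 1 ≤ i → i ≤ k1 → |H i| ≤ 16 / 9 ∧ |h i - H i| ≤ 8 * c := by
  intro i hi
  induction i, hi using Nat.le_induction with
  | base =>
    intro hk1
    have hc0 : 0 ≤ c := (abs_nonneg _).trans (hσs k1 hk1 le_rfl)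
    rw [h1, H1]
    exact ⟨by linarith [hσ k1 hk1 le_rfl], by linarith [hσs k1 hk1 le_rfl]⟩
  | succ i hi ih =>
    intro hik
    obtain ⟨hHi, hhi⟩ := ih (by omega)
    rw [Hstep (i + 1) (by omega) hik, hstep (i + 1) (by omega) hik, Nat.add_sub_cancel]
    exact horner_step_bounds hc (hσ _ (by omega) (by omega)) (hσs _ (by omega) (by omega))
      (hτ _ (by omega) (by omega)) (hτs _ (by omega) (by omega)) (hε _ (by omega) hik) hHi hhi

end

theorem precision_choice_binsplit_general (m k1 m1 : ℕ) (hm : 4 ≤ m)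
    (hk1 : 3 ≤ k1) (hm1 : m1 = 2 * m + 1)
    (σ σs τ τs ε h H : ℕ → ℝ)
    (hσ : ∀ t, 1 ≤ t → t ≤ k1 → |σ t| < 4 / 3)
    (hσs : ∀ t, 1 ≤ t → t ≤ k1 → |σs t - σ t| ≤ 2 ^ (-(m1 : ℤ)))
    (hτ : ∀ t, 2 ≤ t → t ≤ k1 → |τ t| ≤ 1 / 4)
    (hτs : ∀ t, 2 ≤ t → t ≤ k1 → |τs t - τ t| ≤ 2 ^ (-(m1 : ℤ)))
    (hε : ∀ i, 2 ≤ i → i ≤ k1 → |ε i| < 2 ^ (-(m1 : ℤ)))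
    (h1 : h 1 = σs k1)
    (hstep : ∀ i, 2 ≤ i → i ≤ k1 →
      h i = σs (k1 - i + 1) + τs (k1 - i + 2) * h (i - 1) + ε i)
    (H1 : H 1 = σ k1)
    (Hstep : ∀ i, 2 ≤ i → i ≤ k1 →
      H i = σ (k1 - i + 1) + τ (k1 - i + 2) * H (i - 1)) :
    |h k1 - H k1| ≤ 2 ^ (-((m : ℤ) + 1)) := by
  have hc : (2 : ℝ) ^ (-(m1 : ℤ)) ≤ 1 / 4 :=
    calc (2 : ℝ) ^ (-(m1 : ℤ)) ≤ 2 ^ (-2 : ℤ) := zpow_le_zpow_right₀ one_le_two (by omega)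
      _ = 1 / 4 := by norm_num
  have herr := (horner_bounds hc hσ hσs hτ hτs (fun i hi hik => (hε i hi hik).le)
    h1 hstep H1 Hstep k1 (by omega) le_rfl).2
  calc |h k1 - H k1| ≤ 8 * 2 ^ (-(m1 : ℤ)) := herr
    _ = 2 ^ ((3 : ℤ) - m1) := by
      rw [zpow_sub₀ two_ne_zero, zpow_neg, div_eq_mul_inv]
      norm_num
    _ ≤ 2 ^ (-((m : ℤ) + 1)) := zpow_le_zpow_right₀ one_le_two (by omega)

/-- Choice of working precision in `RLinSpaceBinSplit`: taking `m1 = 2m + 1`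
suffices to compute the nested expression with accuracy `2^{-(m+1)}`. -/
theorem precision_choice_binsplit (m k1 m1 : ℕ) (hm : 4 ≤ m)
    (hk1 : 3 ≤ k1) (hk1m : k1 ≤ m) (hm1 : m1 = 2 * m + 1)
    (σ σs τ τs ε h H : ℕ → ℝ)
    (hσ : ∀ t, 1 ≤ t → t ≤ k1 → |σ t| < 4 / 3)
    (hσs : ∀ t, 1 ≤ t → t ≤ k1 → |σs t - σ t| ≤ 2 ^ (-(m1 : ℤ)))
    (hτ : ∀ t, 2 ≤ t → t ≤ k1 → |τ t| ≤ 1 / 4)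
    (hτs : ∀ t, 2 ≤ t → t ≤ k1 → |τs t - τ t| ≤ 2 ^ (-(m1 : ℤ)))
    (hε : ∀ i, 2 ≤ i → i ≤ k1 → |ε i| < 2 ^ (-(m1 : ℤ)))
    (h1 : h 1 = σs k1)
    (hstep : ∀ i, 2 ≤ i → i ≤ k1 →
      h i = σs (k1 - i + 1) + τs (k1 - i + 2) * h (i - 1) + ε i)
    (H1 : H 1 = σ k1)
    (Hstep : ∀ i, 2 ≤ i → i ≤ k1 →
      H i = σ (k1 - i + 1) + τ (k1 - i + 2) * H (i - 1)) :
    |h k1 - H k1| ≤ 2 ^ (-((m : ℤ) + 1)) :=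
  precision_choice_binsplit_general m k1 m1 hm hk1 hm1 σ σs τ τs ε h H hσ hσs hτ hτs hε h1 hstep H1
    Hstep
end

section
/- (Lemma 6) Let m ≥ 16 and k ≥ 1 be natural numbers. Let γ_2, …, γ_{k+1} be real numbers with |γ_i| ≤ 1/4; let e*_2, …, e*_{k+1} be real numbers with |e*_i − exp(γ_i)| ≤ 2^{-m}; let ε_3, …, ε_{k+1} be real numbers with |ε_i| < 2^{-m}. Define h_2 = e*_2 and h_i = h_{i−1}·e*_i + ε_i for 3 ≤ i ≤ k+1, and define H_2 = exp(γ_2) and H_i = H_{i−1}·exp(γ_i) for 3 ≤ i ≤ k+1 (so H_{k+1} = exp(γ_2)·exp(γ_3)···exp(γ_{k+1})). Then the total error satisfies |h_{k+1} − H_{k+1}| < 2^{-m+2(k+1)}. -/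
/-!
Write `δ = 2^{-m}`. The exact partial products satisfy `|H_i| ≤ (3/2)^{i-1}` and every
approximation `e*_i` satisfies `|e*_i| ≤ 3/2 + δ ≤ 2`. Splitting
`h_{i-1} e*_i + ε_i - H_{i-1} exp γ_i = (h_{i-1} - H_{i-1}) e*_i + H_{i-1} (e*_i - exp γ_i) + ε_i`
gives `Δ_i ≤ 2 Δ_{i-1} + (3/2)^{i-2} δ + δ`, and by induction `Δ_i ≤ δ (4^{i-1} - 2)`.
-/

open Real

lemma Real.exp_le_three_halves {x : ℝ} (hx : |x| ≤ 1 / 4) : exp x ≤ 3 / 2 :=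
  calc exp x ≤ exp (1 / 4) := exp_le_exp.2 ((le_abs_self x).trans hx)
    _ ≤ 1 / (1 - 1 / 4) := (exp_bound_div_one_sub_of_interval' (by norm_num) (by norm_num)).le
    _ ≤ 3 / 2 := by norm_num

lemma abs_le_two_of_abs_sub_le {e E δ : ℝ} (hE : |E| ≤ 3 / 2) (he : |e - E| ≤ δ)
    (hδ : δ ≤ 1 / 2) : |e| ≤ 2 := by
  linarith [abs_sub_abs_le_abs_sub e E]

lemma abs_mul_add_sub_mul_le (a A e E ε : ℝ) :
    |a * e + ε - A * E| ≤ |a - A| * |e| + |A| * |e - E| + |ε| :=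
  calc |a * e + ε - A * E| = |(a - A) * e + A * (e - E) + ε| := by ring_nf
    _ ≤ |(a - A) * e| + |A * (e - E)| + |ε| := abs_add_three _ _ _
    _ = |a - A| * |e| + |A| * |e - E| + |ε| := by rw [abs_mul, abs_mul]

lemma rounded_mul_error_le {a A e E ε δ : ℝ} {n : ℕ} (hδ : 0 ≤ δ)
    (ha : |a - A| ≤ δ * (4 ^ n - 2)) (hA : |A| ≤ (3 / 2) ^ n) (he : |e - E| ≤ δ)
    (he₂ : |e| ≤ 2) (hε : |ε| ≤ δ) :
    |a * e + ε - A * E| ≤ δ * (4 ^ (n + 1) - 2) := by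
  have hpow : ((3 : ℝ) / 2) ^ n ≤ 4 ^ n := pow_le_pow_left₀ (by norm_num) (by norm_num) n
  have hone : (1 : ℝ) ≤ 4 ^ n := one_le_pow₀ (by norm_num)
  have h₁ : |a - A| * |e| ≤ δ * (4 ^ n - 2) * 2 :=
    mul_le_mul ha he₂ (abs_nonneg _) ((abs_nonneg _).trans ha)
  have h₂ : |A| * |e - E| ≤ 4 ^ n * δ :=
    mul_le_mul (hA.trans hpow) he (abs_nonneg _) (by positivity)
  calc |a * e + ε - A * E| ≤ |a - A| * |e| + |A| * |e - E| + |ε| := abs_mul_add_sub_mul_le ..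
    _ ≤ δ * (4 ^ n - 2) * 2 + 4 ^ n * δ + δ := by gcongr
    _ ≤ δ * (4 ^ (n + 1) - 2) := by rw [pow_succ]; nlinarith

section RoundedProduct

variable {N : ℕ} {δ : ℝ} {E e ε h H : ℕ → ℝ}

lemma abs_partial_product_le (hE : ∀ i, 2 ≤ i → i ≤ N → |E i| ≤ 3 / 2) (H2 : H 2 = E 2)
    (Hstep : ∀ i, 3 ≤ i → i ≤ N → H i = H (i - 1) * E i) :
    ∀ i, 2 ≤ i → i ≤ N → |H i| ≤ (3 / 2) ^ (i - 1) := by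
  intro i hi
  induction i, hi using Nat.le_induction with
  | base => intro h2N; simpa [H2] using hE 2 le_rfl h2N
  | succ i hi ih =>
    intro hiN
    obtain ⟨n, rfl⟩ : ∃ n, i = n + 1 := ⟨i - 1, by omega⟩
    rw [Hstep _ (by omega) hiN, Nat.add_sub_cancel, abs_mul, pow_succ]
    exact mul_le_mul (ih (by omega)) (hE _ (by omega) hiN) (abs_nonneg _) (by positivity)

lemma abs_rounded_product_sub_le (hδ : δ ≤ 1 / 2)
    (hE : ∀ i, 2 ≤ i → i ≤ N → |E i| ≤ 3 / 2)
    (he : ∀ i, 2 ≤ i → i ≤ N → |e i - E i| ≤ δ)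
    (hε : ∀ i, 3 ≤ i → i ≤ N → |ε i| ≤ δ)
    (h2 : h 2 = e 2) (hstep : ∀ i, 3 ≤ i → i ≤ N → h i = h (i - 1) * e i + ε i)
    (H2 : H 2 = E 2) (Hstep : ∀ i, 3 ≤ i → i ≤ N → H i = H (i - 1) * E i) :
    ∀ i, 2 ≤ i → i ≤ N → |h i - H i| ≤ δ * (4 ^ (i - 1) - 2) := by
  intro i hi
  induction i, hi using Nat.le_induction with
  | base =>
    intro h2N
    have h22 := he 2 le_rfl h2N
    rw [h2, H2]
    norm_num
    linarith [(abs_nonneg _).trans h22]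
  | succ i hi ih =>
    intro hiN
    have hδ₀ : 0 ≤ δ := (abs_nonneg _).trans (he 2 le_rfl (by omega))
    obtain ⟨n, rfl⟩ : ∃ n, i = n + 1 := ⟨i - 1, by omega⟩
    rw [hstep _ (by omega) hiN, Hstep _ (by omega) hiN, Nat.add_sub_cancel]
    exact rounded_mul_error_le hδ₀ (ih (by omega))
      (abs_partial_product_le hE H2 Hstep _ hi (by omega)) (he _ (by omega) hiN)
      (abs_le_two_of_abs_sub_le (hE _ (by omega) hiN) (he _ (by omega) hiN) hδ)
      (hε _ (by omega) hiN)

end RoundedProduct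

/-- (Lemma 6) The total error of the iterative computation of the product
`exp(γ_2)·exp(γ_3)···exp(γ_{k+1})` in the modified FEE method is smaller
than `2^{-m+2(k+1)}`. -/
theorem lemma6_fee_error_bound (m k : ℕ) (hm : 16 ≤ m) (hk : 1 ≤ k)
    (γ es ε h H : ℕ → ℝ)
    (hγ : ∀ i, 2 ≤ i → i ≤ k + 1 → |γ i| ≤ 1 / 4)
    (hes : ∀ i, 2 ≤ i → i ≤ k + 1 → |es i - Real.exp (γ i)| ≤ 2 ^ (-(m : ℤ)))
    (hε : ∀ i, 3 ≤ i → i ≤ k + 1 → |ε i| < 2 ^ (-(m : ℤ)))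
    (h2 : h 2 = es 2)
    (hstep : ∀ i, 3 ≤ i → i ≤ k + 1 → h i = h (i - 1) * es i + ε i)
    (H2 : H 2 = Real.exp (γ 2))
    (Hstep : ∀ i, 3 ≤ i → i ≤ k + 1 → H i = H (i - 1) * Real.exp (γ i)) :
    |h (k + 1) - H (k + 1)| < 2 ^ (-(m : ℤ) + 2 * (k + 1)) := by
  have hδ : (2 : ℝ) ^ (-(m : ℤ)) ≤ 1 / 2 := by
    rw [one_div, ← zpow_neg_one]
    exact zpow_le_zpow_right₀ (by norm_num) (by omega)
  have hexp : ∀ i, 2 ≤ i → i ≤ k + 1 → |exp (γ i)| ≤ 3 / 2 := fun i hi hik => by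
    rw [abs_of_pos (exp_pos _)]
    exact exp_le_three_halves (hγ i hi hik)
  have hΔ := abs_rounded_product_sub_le hδ hexp hes (fun i hi hik => (hε i hi hik).le)
    h2 hstep H2 Hstep (k + 1) (by omega) le_rfl
  have hbound : (2 : ℝ) ^ (-(m : ℤ) + 2 * (k + 1)) = 2 ^ (-(m : ℤ)) * 4 ^ (k + 1) := by
    rw [zpow_add₀ two_ne_zero, show (2 : ℤ) * (k + 1) = ((2 * (k + 1) : ℕ) : ℤ) by push_cast; ring,
      zpow_natCast, pow_mul]
    norm_num
  rw [Nat.add_sub_cancel] at hΔ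
  rw [hbound]
  calc |h (k + 1) - H (k + 1)| ≤ 2 ^ (-(m : ℤ)) * (4 ^ k - 2) := hΔ
    _ < 2 ^ (-(m : ℤ)) * 4 ^ (k + 1) := by
      gcongr
      rw [pow_succ]
      linarith [one_le_pow₀ (M₀ := ℝ) (n := k) (by norm_num : (1 : ℝ) ≤ 4)]
end

section
/- (Complex analogue of Lemma 3) Let k1 ≥ 1 and m1 ≥ 5 be natural numbers. Let σ_1, …, σ_{k1} and σ*_1, …, σ*_{k1} be complex numbers with |σ_t| < 4/3 and |σ*_t − σ_t| ≤ 2^{-m1} for all t; let τ_2, …, τ_{k1} and τ*_2, …, τ*_{k1} be complex numbers with |τ_t| ≤ 1/4 and |τ*_t − τ_t| ≤ 2^{-m1} for all t; let ε_2, …, ε_{k1} be complex numbers with |ε_i| < 2^{-m1}. Define h_1 = σ*_{k1} and h_i = σ*_{k1−i+1} + τ*_{k1−i+2}·h_{i−1} + ε_i for 2 ≤ i ≤ k1. Then |h_i| < 2 for every i with 1 ≤ i ≤ k1. -/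
/-!
Perturbing the data by at most `2^{-m1} ≤ 1/32` only enlarges the bounds to
`‖σ*_t‖ ≤ 4/3 + 1/32` and `‖τ*_t‖ ≤ 1/4 + 1/32`, so the recursion
`h ↦ σ* + τ* h + ε` maps the disc `‖h‖ ≤ 2` into the disc of radius
`4/3 + 1/32 + 2 (1/4 + 1/32) + 1/32 = 47/24 < 2`; induction on `i` does the rest.
-/

lemma norm_add_mul_add_le {R : Type*} [SeminormedRing R] {a t x e : R} {A T X E : ℝ}
    (ha : ‖a‖ ≤ A) (ht : ‖t‖ ≤ T) (hx : ‖x‖ ≤ X) (he : ‖e‖ ≤ E) :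
    ‖a + t * x + e‖ ≤ A + T * X + E :=
  calc ‖a + t * x + e‖ ≤ ‖a‖ + ‖t‖ * ‖x‖ + ‖e‖ := by
        grw [norm_add_le, norm_add_le, norm_mul_le]
    _ ≤ A + T * X + E := by
        gcongr
        exact (norm_nonneg t).trans ht

lemma norm_le_add_of_norm_sub_le {E : Type*} [SeminormedAddGroup E] {x y : E} {r δ : ℝ}
    (hx : ‖x‖ ≤ r) (hxy : ‖y - x‖ ≤ δ) : ‖y‖ ≤ r + δ := by
  linarith [norm_le_norm_add_norm_sub' y x]

lemma two_zpow_neg_le_of_le {m n : ℕ} (h : n ≤ m) :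
    (2 : ℝ) ^ (-(m : ℤ)) ≤ 2 ^ (-(n : ℤ)) :=
  zpow_le_zpow_right₀ one_le_two (by omega)

theorem lemma3_complex_h_bound_general (k1 m1 : ℕ) (hm1 : 5 ≤ m1)
    (σ σs τ τs ε h : ℕ → ℂ)
    (hσ : ∀ t, 1 ≤ t → t ≤ k1 → ‖σ t‖ < 4 / 3)
    (hσs : ∀ t, 1 ≤ t → t ≤ k1 → ‖σs t - σ t‖ ≤ 2 ^ (-(m1 : ℤ)))
    (hτ : ∀ t, 2 ≤ t → t ≤ k1 → ‖τ t‖ ≤ 1 / 4)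
    (hτs : ∀ t, 2 ≤ t → t ≤ k1 → ‖τs t - τ t‖ ≤ 2 ^ (-(m1 : ℤ)))
    (hε : ∀ i, 2 ≤ i → i ≤ k1 → ‖ε i‖ < 2 ^ (-(m1 : ℤ)))
    (h1 : h 1 = σs k1)
    (hstep : ∀ i, 2 ≤ i → i ≤ k1 →
      h i = σs (k1 - i + 1) + τs (k1 - i + 2) * h (i - 1) + ε i) :
    ∀ i, 1 ≤ i → i ≤ k1 → ‖h i‖ < 2 := by
  have hδ : (2 : ℝ) ^ (-(m1 : ℤ)) ≤ 1 / 32 :=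
    (two_zpow_neg_le_of_le hm1).trans_eq (by norm_num)
  have hσs' : ∀ t, 1 ≤ t → t ≤ k1 → ‖σs t‖ ≤ 4 / 3 + 1 / 32 := fun t ht htk =>
    norm_le_add_of_norm_sub_le (hσ t ht htk).le ((hσs t ht htk).trans hδ)
  have hτs' : ∀ t, 2 ≤ t → t ≤ k1 → ‖τs t‖ ≤ 1 / 4 + 1 / 32 := fun t ht htk =>
    norm_le_add_of_norm_sub_le (hτ t ht htk) ((hτs t ht htk).trans hδ)
  intro i hi
  induction i, hi using Nat.le_induction with
  | base =>
    intro hk1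
    rw [h1]
    linarith [hσs' k1 hk1 le_rfl]
  | succ n hn ih =>
    intro hnk
    rw [hstep (n + 1) (by omega) hnk, Nat.add_sub_cancel]
    calc _ ≤ (4 / 3 + 1 / 32) + (1 / 4 + 1 / 32) * 2 + 1 / 32 :=
          norm_add_mul_add_le (hσs' _ (by omega) (by omega)) (hτs' _ (by omega) (by omega))
            (ih (by omega)).le ((hε _ (by omega) hnk).le.trans hδ)
      _ < 2 := by norm_num

/-- (Complex analogue of Lemma 3) The computed values `h_i` of the iterative
evaluation of the nested expression `σ_1 + τ_2[σ_2 + … + τ_{k1}σ_{k1}]` with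
complex blocks are bounded by `2`. -/
theorem lemma3_complex_h_bound (k1 m1 : ℕ) (hk1 : 1 ≤ k1) (hm1 : 5 ≤ m1)
    (σ σs τ τs ε h : ℕ → ℂ)
    (hσ : ∀ t, 1 ≤ t → t ≤ k1 → ‖σ t‖ < 4 / 3)
    (hσs : ∀ t, 1 ≤ t → t ≤ k1 → ‖σs t - σ t‖ ≤ 2 ^ (-(m1 : ℤ)))
    (hτ : ∀ t, 2 ≤ t → t ≤ k1 → ‖τ t‖ ≤ 1 / 4)
    (hτs : ∀ t, 2 ≤ t → t ≤ k1 → ‖τs t - τ t‖ ≤ 2 ^ (-(m1 : ℤ)))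
    (hε : ∀ i, 2 ≤ i → i ≤ k1 → ‖ε i‖ < 2 ^ (-(m1 : ℤ)))
    (h1 : h 1 = σs k1)
    (hstep : ∀ i, 2 ≤ i → i ≤ k1 →
      h i = σs (k1 - i + 1) + τs (k1 - i + 2) * h (i - 1) + ε i) :
    ∀ i, 1 ≤ i → i ≤ k1 → ‖h i‖ < 2 :=
  lemma3_complex_h_bound_general k1 m1 hm1 σ σs τ τs ε h hσ hσs hτ hτs hε h1 hstep
end

section
/- (Complex analogue of Lemma 6) Let m ≥ 16 and k ≥ 1 be natural numbers. Let γ_2, …, γ_{k+1} be real numbers with |γ_i| ≤ 1/4; let e*_2, …, e*_{k+1} be complex numbers with |e*_i − exp(i·γ_i)| ≤ 2^{-m}; let ε_3, …, ε_{k+1} be complex numbers with |ε_i| < 2^{-m}. Define h_2 = e*_2 and h_i = h_{i−1}·e*_i + ε_i for 3 ≤ i ≤ k+1, and define H_2 = exp(i·γ_2) and H_i = H_{i−1}·exp(i·γ_i) for 3 ≤ i ≤ k+1 (so H_{k+1} = exp(i·(γ_2 + γ_3 + … + γ_{k+1}))). Then |h_{k+1} − H_{k+1}| < 2^{-m+2(k+1)}.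 -/
/-!
Write `e_i = u_i + (e_i - u_i)` with `u_i = exp(i·γ_i)`, so `‖u_i‖ = 1` and `‖e_i‖ ≤ 1 + 2^{-m} ≤ 2`.
Then `h_i - H_i = (h_{i-1} - H_{i-1}) e_i + H_{i-1} (e_i - u_i) + ε_i`, so the error at most doubles
and grows by `2·2^{-m}` at each step. Starting from `‖h_2 - H_2‖ ≤ 2^{-m}`, this gives
`‖h_j - H_j‖ ≤ (3·2^{j-2} - 2)·2^{-m}`, far below `2^{2(k+1)}·2^{-m}` at `j = k + 1`.
-/

section PerturbedProducts

variable {R : Type*} [SeminormedRing R]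

theorem norm_mul_add_sub_mul_le (x X e u η : R) :
    ‖(x * e + η) - X * u‖ ≤ ‖x - X‖ * ‖e‖ + ‖X‖ * ‖e - u‖ + ‖η‖ := by
  calc ‖(x * e + η) - X * u‖ = ‖(x - X) * e + X * (e - u) + η‖ := by congr 1; noncomm_ring
    _ ≤ ‖(x - X) * e‖ + ‖X * (e - u)‖ + ‖η‖ := norm_add₃_le
    _ ≤ ‖x - X‖ * ‖e‖ + ‖X‖ * ‖e - u‖ + ‖η‖ := by gcongr <;> exact norm_mul_le _ _

theorem norm_sub_le_of_perturbed_products {a n : ℕ} {δ : ℝ} {x X e u η : ℕ → R} (hδ : δ ≤ 1)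
    (hu : ∀ i, a ≤ i → i ≤ n → ‖u i‖ ≤ 1)
    (he : ∀ i, a ≤ i → i ≤ n → ‖e i - u i‖ ≤ δ)
    (hη : ∀ i, a < i → i ≤ n → ‖η i‖ ≤ δ)
    (hx : x a = e a) (hxs : ∀ i, a < i → i ≤ n → x i = x (i - 1) * e i + η i)
    (hX : X a = u a) (hXs : ∀ i, a < i → i ≤ n → X i = X (i - 1) * u i) :
    ∀ j, a ≤ j → j ≤ n → ‖X j‖ ≤ 1 ∧ ‖x j - X j‖ ≤ (3 * 2 ^ (j - a) - 2) * δ := by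
  intro j haj
  induction j, haj using Nat.le_induction with
  | base =>
    intro han
    rw [hx, hX, Nat.sub_self, pow_zero]
    exact ⟨hu a le_rfl han, by linarith [he a le_rfl han]⟩
  | succ j haj ih =>
    intro hjn
    obtain ⟨hXj, herr⟩ := ih (by omega)
    have hj : a < j + 1 := Nat.lt_succ_of_le haj
    have hu' := hu (j + 1) (by omega) hjn
    have he' := he (j + 1) (by omega) hjn
    have hη' := hη (j + 1) hj hjn
    have he_norm : ‖e (j + 1)‖ ≤ 2 := by
      linarith [norm_le_norm_add_norm_sub' (e (j + 1)) (u (j + 1))]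
    have hpow : (2 : ℝ) ^ (j + 1 - a) = 2 * 2 ^ (j - a) := by
      rw [show j + 1 - a = j - a + 1 by omega, pow_succ']
    rw [hxs (j + 1) hj hjn, hXs (j + 1) hj hjn, Nat.add_sub_cancel, hpow]
    refine ⟨(norm_mul_le _ _).trans (mul_le_one₀ hXj (norm_nonneg _) hu'), ?_⟩
    calc ‖(x j * e (j + 1) + η (j + 1)) - X j * u (j + 1)‖
        ≤ ‖x j - X j‖ * ‖e (j + 1)‖ + ‖X j‖ * ‖e (j + 1) - u (j + 1)‖ + ‖η (j + 1)‖ :=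
          norm_mul_add_sub_mul_le _ _ _ _ _
      _ ≤ (3 * 2 ^ (j - a) - 2) * δ * 2 + 1 * δ + δ := by
          gcongr; exact (norm_nonneg _).trans herr
      _ = (3 * (2 * 2 ^ (j - a)) - 2) * δ := by ring

end PerturbedProducts

theorem three_mul_two_pow_sub_two_lt_two_pow (k : ℕ) :
    (3 * 2 ^ (k - 1) - 2 : ℝ) < 2 ^ (2 * (k + 1)) := by
  have h : (2 : ℝ) ^ (k - 1 + 2) ≤ 2 ^ (2 * (k + 1)) := pow_le_pow_right₀ one_le_two (by omega)
  rw [pow_add] at h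
  linarith [pow_pos (two_pos : (0 : ℝ) < 2) (k - 1)]

theorem lemma6_complex_fee_error_bound_general (m k : ℕ) (hk : 1 ≤ k)
    (γ : ℕ → ℝ) (es ε h H : ℕ → ℂ)
    (hes : ∀ i, 2 ≤ i → i ≤ k + 1 →
      ‖es i - Complex.exp (Complex.I * (γ i : ℂ))‖ ≤ 2 ^ (-(m : ℤ)))
    (hε : ∀ i, 3 ≤ i → i ≤ k + 1 → ‖ε i‖ < 2 ^ (-(m : ℤ)))
    (h2 : h 2 = es 2)
    (hstep : ∀ i, 3 ≤ i → i ≤ k + 1 → h i = h (i - 1) * es i + ε i)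
    (H2 : H 2 = Complex.exp (Complex.I * (γ 2 : ℂ)))
    (Hstep : ∀ i, 3 ≤ i → i ≤ k + 1 →
      H i = H (i - 1) * Complex.exp (Complex.I * (γ i : ℂ))) :
    ‖h (k + 1) - H (k + 1)‖ < 2 ^ (-(m : ℤ) + 2 * (k + 1)) := by
  have hδ : (2 : ℝ) ^ (-(m : ℤ)) ≤ 1 := zpow_le_one_of_nonpos₀ one_le_two (by omega)
  obtain ⟨-, herr⟩ := norm_sub_le_of_perturbed_products hδ
    (fun i _ _ => (Complex.norm_exp_I_mul_ofReal (γ i)).le) hes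
    (fun i hi hik => (hε i hi hik).le) h2 hstep H2 Hstep (k + 1) (by omega) le_rfl
  rw [show k + 1 - 2 = k - 1 by omega] at herr
  calc ‖h (k + 1) - H (k + 1)‖ ≤ (3 * 2 ^ (k - 1) - 2) * 2 ^ (-(m : ℤ)) := herr
    _ < 2 ^ (2 * (k + 1)) * 2 ^ (-(m : ℤ)) := by
        gcongr; exact three_mul_two_pow_sub_two_lt_two_pow k
    _ = 2 ^ (-(m : ℤ) + 2 * (k + 1)) := by
        rw [zpow_add₀ two_ne_zero, mul_comm]; norm_cast

/-- (Complex analogue of Lemma 6) The total error of the iterative computation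
of the product `exp(i·γ_2)·exp(i·γ_3)···exp(i·γ_{k+1})` in the modified FEE
method is smaller than `2^{-m+2(k+1)}`. -/
theorem lemma6_complex_fee_error_bound (m k : ℕ) (hm : 16 ≤ m) (hk : 1 ≤ k)
    (γ : ℕ → ℝ) (es ε h H : ℕ → ℂ)
    (hγ : ∀ i, 2 ≤ i → i ≤ k + 1 → |γ i| ≤ 1 / 4)
    (hes : ∀ i, 2 ≤ i → i ≤ k + 1 →
      ‖es i - Complex.exp (Complex.I * (γ i : ℂ))‖ ≤ 2 ^ (-(m : ℤ)))
    (hε : ∀ i, 3 ≤ i → i ≤ k + 1 → ‖ε i‖ < 2 ^ (-(m : ℤ)))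
    (h2 : h 2 = es 2)
    (hstep : ∀ i, 3 ≤ i → i ≤ k + 1 → h i = h (i - 1) * es i + ε i)
    (H2 : H 2 = Complex.exp (Complex.I * (γ 2 : ℂ)))
    (Hstep : ∀ i, 3 ≤ i → i ≤ k + 1 →
      H i = H (i - 1) * Complex.exp (Complex.I * (γ i : ℂ))) :
    ‖h (k + 1) - H (k + 1)‖ < 2 ^ (-(m : ℤ) + 2 * (k + 1)) :=
  lemma6_complex_fee_error_bound_general m k hk γ es ε h H hes hε h2 hstep H2 Hstep
end
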